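/- Let R be a commutative ring and let A be a Hopf algebra over R that is free of finite rank as an R-module. Then there exist a subring R₀ ⊆ R that is a finitely generated ℤ-algebra and a Hopf algebra A₀ over R₀, free of finite rank as an R₀-module, together with an isomorphism of Hopf algebras over R between the base change R ⊗_{R₀} A₀ and A. -/

import Mathlib

open scoped BigOperators TensorProduct

noncomputable section

set_option synthInstance.maxHeartbeats 1000000
set_option maxHeartbeats 3200000

noncomputable section

section Inj

theorem injective_of_basis_linearIndependent {S M N ι : Type*} [Ring S] [AddCommGroup M]
    [AddCommGroup N] [Module S M] [Module S N] (b : Module.Basis ι S M) {f : M →ₗ[S] N}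
    (h : LinearIndependent S (⇑f ∘ ⇑b)) : Function.Injective f := by
  have key : ∀ z, f z = 0 → z = 0 := by
    intro z hz
    have h1 : Finsupp.linearCombination S (⇑f ∘ ⇑b) (b.repr z) = 0 := by
      rw [← Finsupp.apply_linearCombination, b.linearCombination_repr, hz]
    have h2 := linearIndependent_iff.mp h _ h1
    have h3 := congrArg (Finsupp.linearCombination S ⇑b) h2
    rw [b.linearCombination_repr, map_zero] at h3
    exact h3
  intro x y hxy
  have := key (x - y) (by rw [map_sub, hxy, sub_self])
  exact sub_eq_zero.mp this

end Inj

section Mix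

variable {R₀ R : Type*} [CommRing R₀] [CommRing R] [Algebra R₀ R]
variable {M N M' N' : Type*}
  [AddCommGroup M] [Module R₀ M] [AddCommGroup N] [Module R₀ N]
  [AddCommGroup M'] [Module R M'] [Module R₀ M'] [IsScalarTower R₀ R M']
  [AddCommGroup N'] [Module R N'] [Module R₀ N'] [IsScalarTower R₀ R N']

/-- The canonical map `M ⊗[R₀] N → M' ⊗[R] N'` induced by `R₀`-linear maps into
`R`-modules. -/
def mixMap (f : M →ₗ[R₀] M') (g : N →ₗ[R₀] N') : M ⊗[R₀] N →ₗ[R₀] M' ⊗[R] N' :=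
  TensorProduct.lift (LinearMap.mk₂ R₀ (fun m n => f m ⊗ₜ[R] g n)
    (fun m₁ m₂ n => by simp [TensorProduct.add_tmul])
    (fun r m n => by simp [TensorProduct.smul_tmul'])
    (fun m n₁ n₂ => by simp [TensorProduct.tmul_add])
    (fun r m n => by simp [TensorProduct.tmul_smul]))

@[simp] theorem mixMap_tmul (f : M →ₗ[R₀] M') (g : N →ₗ[R₀] N') (m : M) (n : N) :
    mixMap f g (m ⊗ₜ[R₀] n) = f m ⊗ₜ[R] g n := rfl

theorem mixMap_injective {ι κ : Type*} (f : M →ₗ[R₀] M') (g : N →ₗ[R₀] N')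
    (hinj : Function.Injective (algebraMap R₀ R))
    (bM : Module.Basis ι R₀ M) (bN : Module.Basis κ R₀ N) (βM : Module.Basis ι R M') (βN : Module.Basis κ R N')
    (hf : ∀ i, f (bM i) = βM i) (hg : ∀ j, g (bN j) = βN j) :
    Function.Injective (mixMap (R := R) f g) := by
  apply injective_of_basis_linearIndependent (bM.tensorProduct bN)
  have hres : LinearIndependent R₀ ⇑(βM.tensorProduct βN) := by
    refine (βM.tensorProduct βN).linearIndependent.restrict_scalars ?_
    intro x y hxy
    apply hinj
    simpa [Algebra.smul_def] using hxy
  have : ⇑(mixMap f g) ∘ ⇑(bM.tensorProduct bN) = ⇑(βM.tensorProduct βN) := by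
    funext p
    obtain ⟨i, j⟩ := p
    rw [Function.comp_apply, Module.Basis.tensorProduct_apply, mixMap_tmul, hf, hg,
      Module.Basis.tensorProduct_apply]
  rw [this]
  exact hres

end Mix

section Descent

variable {R : Type*} [CommRing R] {A : Type*} [Ring A] [HopfAlgebra R A]
variable {ι : Type*} [Fintype ι] (b : Module.Basis ι R A)
variable {R₀ : Subalgebra ℤ R}
variable {B : Type*} [Ring B] [Algebra R₀ B]
variable (F : B →ₐ[R₀] A) (bB : Module.Basis ι R₀ B)

open Coalgebra HopfAlgebra

theorem halg (r : R₀) : algebraMap R₀ R r = (r : R) := by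
  rw [Subalgebra.algebraMap_eq]; simp

theorem halg_inj : Function.Injective (algebraMap R₀ R) := by
  intro x y h
  rw [halg, halg] at h
  exact Subtype.ext h

/-- scalar coercion for smul on `R`-modules -/
theorem coeSmul {T : Type*} [AddCommMonoid T] [Module R T]
    (r : R₀) (x : T) : r • x = (r : R) • x := by
  rw [← algebraMap_smul (A := R) r x, Subalgebra.algebraMap_eq]; simp

theorem bT_apply (jk : ι × ι) :
    (b.tensorProduct b) jk = b jk.1 ⊗ₜ[R] b jk.2 := by
  cases jk; exact Module.Basis.tensorProduct_apply b b _ _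

theorem comul_b_eq (i : ι) :
    comul (R := R) (b i) = ∑ jk : ι × ι,
      ((b.tensorProduct b).repr (comul (R := R) (b i))) jk • (b jk.1 ⊗ₜ[R] b jk.2) := by
  conv_lhs => rw [← Module.Basis.sum_repr (b.tensorProduct b) (comul (R := R) (b i))]
  exact Finset.sum_congr rfl fun jk _ => by rw [bT_apply]

theorem antipode_b_eq (i : ι) :
    antipode (R := R) (b i) = ∑ k : ι, (b.repr (antipode (R := R) (b i))) k • b k :=
  (Module.Basis.sum_repr b _).symm

variable (hd : ∀ (i : ι) (jk : ι × ι), ((b.tensorProduct b).repr (comul (R := R) (b i))) jk ∈ R₀)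
variable (hc : ∀ i : ι, counit (R := R) (b i) ∈ R₀)
variable (hs : ∀ (i k : ι), (b.repr (antipode (R := R) (b i))) k ∈ R₀)

/-- descended comultiplication -/
def comulB : B →ₗ[R₀] B ⊗[R₀] B :=
  bB.constr R₀ fun i => ∑ jk : ι × ι,
    (⟨_, hd i jk⟩ : R₀) • (bB jk.1 ⊗ₜ[R₀] bB jk.2)

/-- descended counit -/
def counitB : B →ₗ[R₀] R₀ :=
  bB.constr R₀ fun i => (⟨_, hc i⟩ : R₀)

/-- descended antipode -/
def antipodeB : B →ₗ[R₀] B :=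
  bB.constr R₀ fun i => ∑ k : ι, (⟨_, hs i k⟩ : R₀) • bB k

theorem comulB_basis (i : ι) : comulB b bB hd (bB i) =
    ∑ jk : ι × ι, (⟨_, hd i jk⟩ : R₀) • (bB jk.1 ⊗ₜ[R₀] bB jk.2) :=
  Module.Basis.constr_basis bB R₀ _ i

theorem counitB_basis (i : ι) : counitB b bB hc (bB i) = (⟨_, hc i⟩ : R₀) :=
  Module.Basis.constr_basis bB R₀ _ i

theorem antipodeB_basis (i : ι) : antipodeB b bB hs (bB i) =
    ∑ k : ι, (⟨_, hs i k⟩ : R₀) • bB k :=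
  Module.Basis.constr_basis bB R₀ _ i

variable (hF : ∀ i, F (bB i) = b i)

/-- the mixed-base tensor square of `F` -/
def j2 : B ⊗[R₀] B →ₗ[R₀] A ⊗[R] A := mixMap (R := R) F.toLinearMap F.toLinearMap

include hF in
theorem j2_basis (jk : ι × ι) :
    j2 F ((bB.tensorProduct bB) jk) = (b.tensorProduct b) jk := by
  cases jk
  rw [Module.Basis.tensorProduct_apply, Module.Basis.tensorProduct_apply]
  exact congrArg₂ (fun x y => x ⊗ₜ[R] y) (hF _) (hF _)

include hF in
theorem j2_injective : Function.Injective (j2 (R₀ := R₀) F) :=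
  mixMap_injective _ _ halg_inj bB bB b b hF hF

include hF in
theorem sq2 : j2 F ∘ₗ comulB b bB hd =
    ((comul (R := R) (A := A)).restrictScalars R₀) ∘ₗ F.toLinearMap := by
  refine Module.Basis.ext bB fun i => ?_
  rw [LinearMap.comp_apply, LinearMap.comp_apply, LinearMap.coe_restrictScalars,
    AlgHom.toLinearMap_apply, hF, comulB_basis, map_sum]
  refine Eq.trans (Finset.sum_congr rfl fun jk _ => ?_) (comul_b_eq b i).symm
  rw [map_smul, coeSmul]
  exact congrArg (fun t => ((b.tensorProduct b).repr (comul (R := R) (b i))) jk • t)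
    (congrArg₂ (fun x y => x ⊗ₜ[R] y) (hF jk.1) (hF jk.2))

include hF in
theorem sq3 : ((counit (R := R) (A := A)).restrictScalars R₀) ∘ₗ F.toLinearMap =
    (Algebra.linearMap R₀ R) ∘ₗ counitB b bB hc := by
  refine Module.Basis.ext bB fun i => ?_
  rw [LinearMap.comp_apply, LinearMap.comp_apply, counitB_basis,
    LinearMap.coe_restrictScalars, AlgHom.toLinearMap_apply, hF, Algebra.linearMap_apply, halg]

include hF in
theorem sq4 : F.toLinearMap ∘ₗ antipodeB b bB hs =
    ((antipode (R := R) (A := A)).restrictScalars R₀) ∘ₗ F.toLinearMap := by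
  refine Module.Basis.ext bB fun i => ?_
  rw [LinearMap.comp_apply, LinearMap.comp_apply, LinearMap.coe_restrictScalars,
    AlgHom.toLinearMap_apply, AlgHom.toLinearMap_apply, hF, antipodeB_basis, map_sum]
  refine Eq.trans (Finset.sum_congr rfl fun k _ => ?_) (antipode_b_eq b i).symm
  rw [map_smul, coeSmul, hF]

include hF in
theorem hsq2 (a : B) : j2 F (comulB b bB hd a) = comul (R := R) (F a) :=
  LinearMap.congr_fun (sq2 b F bB hd hF) a

include hF in
theorem hsq3 (a : B) : counit (R := R) (F a) = algebraMap R₀ R (counitB b bB hc a) :=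
  LinearMap.congr_fun (sq3 b F bB hc hF) a

include hF in
theorem hsq4 (a : B) : F (antipodeB b bB hs a) = antipode (R := R) (F a) :=
  LinearMap.congr_fun (sq4 b F bB hs hF) a

theorem j2_tmul (x y : B) : j2 F (x ⊗ₜ[R₀] y) = F x ⊗ₜ[R] F y := rfl

/-- mixed map on `B ⊗ (B ⊗ B)` -/
def j12 : B ⊗[R₀] (B ⊗[R₀] B) →ₗ[R₀] A ⊗[R] (A ⊗[R] A) :=
  mixMap (R := R) F.toLinearMap (j2 F)

/-- mixed map on `(B ⊗ B) ⊗ B` -/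
def j21 : (B ⊗[R₀] B) ⊗[R₀] B →ₗ[R₀] (A ⊗[R] A) ⊗[R] A :=
  mixMap (R := R) (j2 F) F.toLinearMap

/-- mixed map on `R₀ ⊗ B` -/
def jR : R₀ ⊗[R₀] B →ₗ[R₀] R ⊗[R] A :=
  mixMap (R := R) (Algebra.linearMap R₀ R) F.toLinearMap

/-- mixed map on `B ⊗ R₀` -/
def jR' : B ⊗[R₀] R₀ →ₗ[R₀] A ⊗[R] R :=
  mixMap (R := R) F.toLinearMap (Algebra.linearMap R₀ R)

theorem j12_tmul (x : B) (t : B ⊗[R₀] B) : j12 F (x ⊗ₜ[R₀] t) = F x ⊗ₜ[R] j2 F t := rfl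
theorem j21_tmul (t : B ⊗[R₀] B) (x : B) : j21 F (t ⊗ₜ[R₀] x) = j2 F t ⊗ₜ[R] F x := rfl
theorem jR_tmul (r : R₀) (x : B) : jR F (r ⊗ₜ[R₀] x) = algebraMap R₀ R r ⊗ₜ[R] F x := by
  rfl
theorem jR'_tmul (x : B) (r : R₀) : jR' F (x ⊗ₜ[R₀] r) = F x ⊗ₜ[R] algebraMap R₀ R r := by
  rfl

theorem singleton_image (i : PUnit.{1}) :
    Algebra.linearMap R₀ R (Module.Basis.singleton PUnit R₀ i) = Module.Basis.singleton PUnit R i := by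
  simp [Module.Basis.singleton_apply]

include hF in
theorem j12_injective : Function.Injective (j12 F) :=
  mixMap_injective _ _ halg_inj bB (bB.tensorProduct bB) b (b.tensorProduct b) hF
    (j2_basis b F bB hF)

include hF in
theorem j21_injective : Function.Injective (j21 F) :=
  mixMap_injective _ _ halg_inj (bB.tensorProduct bB) bB (b.tensorProduct b) b
    (j2_basis b F bB hF) hF

include hF in
theorem jR_injective : Function.Injective (jR F) :=
  mixMap_injective _ _ halg_inj (Module.Basis.singleton PUnit R₀) bB (Module.Basis.singleton PUnit R) b
    singleton_image hF

include hF in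
theorem jR'_injective : Function.Injective (jR' F) :=
  mixMap_injective _ _ halg_inj bB (Module.Basis.singleton PUnit R₀) b (Module.Basis.singleton PUnit R)
    hF singleton_image

include hF in
theorem F_injective : Function.Injective F := by
  have h1 : ⇑F.toLinearMap ∘ ⇑bB = ⇑b := funext fun i => by simp [hF]
  have h2 : LinearIndependent R₀ (⇑F.toLinearMap ∘ ⇑bB) := by
    rw [h1]
    exact b.linearIndependent.restrict_scalars
      (fun x y hxy => halg_inj (by simpa [Algebra.smul_def] using hxy))
  exact fun x y hxy => injective_of_basis_linearIndependent bB h2 hxy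

open Coalgebra in
include hF in
theorem L1 : j12 F ∘ₗ (comulB b bB hd).lTensor B =
    ((comul (R := R) (A := A)).lTensor A).restrictScalars R₀ ∘ₗ j2 F :=
  TensorProduct.ext' fun x y => by
    simp only [LinearMap.comp_apply, LinearMap.lTensor_tmul, LinearMap.coe_restrictScalars,
      j12_tmul, j2_tmul, hsq2 b F bB hd hF]

open Coalgebra in
include hF in
theorem L2 : j21 F ∘ₗ (comulB b bB hd).rTensor B =
    ((comul (R := R) (A := A)).rTensor A).restrictScalars R₀ ∘ₗ j2 F :=
  TensorProduct.ext' fun x y => by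
    simp only [LinearMap.comp_apply, LinearMap.rTensor_tmul, LinearMap.coe_restrictScalars,
      j21_tmul, j2_tmul, hsq2 b F bB hd hF]

theorem L3 : j12 F ∘ₗ (TensorProduct.assoc R₀ B B B).toLinearMap =
    ((TensorProduct.assoc R A A A).toLinearMap.restrictScalars R₀) ∘ₗ j21 F :=
  TensorProduct.ext_threefold fun x y z => by
    simp only [LinearMap.comp_apply, LinearMap.coe_restrictScalars, LinearEquiv.coe_toLinearMap,
      TensorProduct.assoc_tmul, j12_tmul, j21_tmul, j2_tmul]

open Coalgebra in
include hF in
theorem L4 : jR F ∘ₗ (counitB b bB hc).rTensor B =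
    ((counit (R := R) (A := A)).rTensor A).restrictScalars R₀ ∘ₗ j2 F :=
  TensorProduct.ext' fun x y => by
    simp only [LinearMap.comp_apply, LinearMap.rTensor_tmul, LinearMap.coe_restrictScalars,
      jR_tmul, j2_tmul, ← hsq3 b F bB hc hF]

open Coalgebra in
include hF in
theorem L4' : jR' F ∘ₗ (counitB b bB hc).lTensor B =
    ((counit (R := R) (A := A)).lTensor A).restrictScalars R₀ ∘ₗ j2 F :=
  TensorProduct.ext' fun x y => by
    simp only [LinearMap.comp_apply, LinearMap.lTensor_tmul, LinearMap.coe_restrictScalars,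
      jR'_tmul, j2_tmul, ← hsq3 b F bB hc hF]

theorem L5 : F.toLinearMap ∘ₗ LinearMap.mul' R₀ B =
    (LinearMap.mul' R A).restrictScalars R₀ ∘ₗ j2 F :=
  TensorProduct.ext' fun x y => by
    simp only [LinearMap.comp_apply, LinearMap.coe_restrictScalars, LinearMap.mul'_apply,
      j2_tmul, AlgHom.toLinearMap_apply, map_mul]

open HopfAlgebra in
include hF in
theorem L6 : j2 F ∘ₗ (antipodeB b bB hs).rTensor B =
    ((antipode (R := R) (A := A)).rTensor A).restrictScalars R₀ ∘ₗ j2 F :=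
  TensorProduct.ext' fun x y => by
    simp only [LinearMap.comp_apply, LinearMap.rTensor_tmul, LinearMap.coe_restrictScalars,
      j2_tmul, hsq4 b F bB hs hF]

open HopfAlgebra in
include hF in
theorem L6' : j2 F ∘ₗ (antipodeB b bB hs).lTensor B =
    ((antipode (R := R) (A := A)).lTensor A).restrictScalars R₀ ∘ₗ j2 F :=
  TensorProduct.ext' fun x y => by
    simp only [LinearMap.comp_apply, LinearMap.lTensor_tmul, LinearMap.coe_restrictScalars,
      j2_tmul, hsq4 b F bB hs hF]

theorem j2_mul (x y : B ⊗[R₀] B) : j2 F (x * y) = j2 F x * j2 F y := by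
  induction x using TensorProduct.induction_on with
  | zero => simp
  | tmul a c =>
    induction y using TensorProduct.induction_on with
    | zero => simp
    | tmul a' c' => simp [Algebra.TensorProduct.tmul_mul_tmul, j2_tmul, map_mul]
    | add u v hu hv => rw [mul_add, map_add, hu, hv, map_add, mul_add]
  | add u v hu hv => rw [add_mul, map_add, hu, hv, map_add, add_mul]

include hF in
/-- the descended coalgebra structure -/
def coalgebraB : Coalgebra R₀ B where
  comul := comulB b bB hd
  counit := counitB b bB hc
  coassoc := by
    apply LinearMap.ext; intro a
    apply j12_injective b F bB hF
    have h1 := LinearMap.congr_fun (L1 b F bB hd hF) (comulB b bB hd a)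
    have h2 := LinearMap.congr_fun (L2 b F bB hd hF) (comulB b bB hd a)
    have h3 := LinearMap.congr_fun (L3 F)
      ((comulB b bB hd).rTensor B (comulB b bB hd a))
    simp only [LinearMap.comp_apply, LinearMap.coe_restrictScalars, LinearEquiv.coe_coe,
      LinearEquiv.coe_toLinearMap] at h1 h2 h3 ⊢
    rw [h3, h2, hsq2 b F bB hd hF, h1, hsq2 b F bB hd hF]
    exact Coalgebra.coassoc_apply (F a)
  rTensor_counit_comp_comul := by
    apply LinearMap.ext; intro a
    apply jR_injective b F bB hF
    have h4 := LinearMap.congr_fun (L4 b F bB hc hF) (comulB b bB hd a)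
    simp only [LinearMap.comp_apply, LinearMap.coe_restrictScalars] at h4 ⊢
    rw [h4, hsq2 b F bB hd hF, Coalgebra.rTensor_counit_comul, TensorProduct.mk_apply,
      jR_tmul, map_one]
  lTensor_counit_comp_comul := by
    apply LinearMap.ext; intro a
    apply jR'_injective b F bB hF
    have h4 := LinearMap.congr_fun (L4' b F bB hc hF) (comulB b bB hd a)
    simp only [LinearMap.comp_apply, LinearMap.coe_restrictScalars, LinearMap.flip_apply] at h4 ⊢
    rw [h4, hsq2 b F bB hd hF, Coalgebra.lTensor_counit_comul, TensorProduct.mk_apply,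
      jR'_tmul, map_one]

include hF in
/-- the descended bialgebra structure -/
def bialgebraB : Bialgebra R₀ B :=
  letI := coalgebraB b F bB hd hc hF
  Bialgebra.mk' R₀ B
    (halg_inj (by
      show algebraMap R₀ R (counitB b bB hc 1) = algebraMap R₀ R 1
      rw [← hsq3 b F bB hc hF 1, map_one, Bialgebra.counit_one, map_one]))
    (fun {x y} => halg_inj (by
      show algebraMap R₀ R (counitB b bB hc (x * y)) =
        algebraMap R₀ R (counitB b bB hc x * counitB b bB hc y)
      rw [map_mul (algebraMap R₀ R), ← hsq3 b F bB hc hF, ← hsq3 b F bB hc hF,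
        ← hsq3 b F bB hc hF, map_mul F, Bialgebra.counit_mul]))
    (j2_injective b F bB hF (by
      show j2 F (comulB b bB hd 1) = j2 F 1
      have h1 : j2 F (1 : B ⊗[R₀] B) = 1 := by
        rw [Algebra.TensorProduct.one_def, j2_tmul, map_one, ← Algebra.TensorProduct.one_def]
      rw [hsq2 b F bB hd hF 1, map_one, Bialgebra.comul_one, h1]))
    (fun {x y} => j2_injective b F bB hF (by
      show j2 F (comulB b bB hd (x * y)) = j2 F (comulB b bB hd x * comulB b bB hd y)
      rw [hsq2 b F bB hd hF, map_mul, Bialgebra.comul_mul, j2_mul,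
        hsq2 b F bB hd hF, hsq2 b F bB hd hF]))

include hF in
/-- the descended Hopf algebra structure -/
def hopfAlgebraB : HopfAlgebra R₀ B :=
  letI := bialgebraB b F bB hd hc hF
  { antipode := antipodeB b bB hs
    mul_antipode_rTensor_comul := by
      apply LinearMap.ext; intro a
      apply F_injective b F bB hF
      show F (LinearMap.mul' R₀ B ((antipodeB b bB hs).rTensor B (comulB b bB hd a))) =
        F (algebraMap R₀ B (counitB b bB hc a))
      have h5 := LinearMap.congr_fun (L5 F) ((antipodeB b bB hs).rTensor B (comulB b bB hd a))
      have h6 := LinearMap.congr_fun (L6 b F bB hs hF) (comulB b bB hd a)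
      simp only [LinearMap.comp_apply, LinearMap.coe_restrictScalars,
        AlgHom.toLinearMap_apply, Algebra.linearMap_apply] at h5 h6
      rw [h5, h6, hsq2 b F bB hd hF, HopfAlgebra.mul_antipode_rTensor_comul_apply,
        hsq3 b F bB hc hF, F.commutes, IsScalarTower.algebraMap_apply R₀ R A]
    mul_antipode_lTensor_comul := by
      apply LinearMap.ext; intro a
      apply F_injective b F bB hF
      show F (LinearMap.mul' R₀ B ((antipodeB b bB hs).lTensor B (comulB b bB hd a))) =
        F (algebraMap R₀ B (counitB b bB hc a))
      have h5 := LinearMap.congr_fun (L5 F) ((antipodeB b bB hs).lTensor B (comulB b bB hd a))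
      have h6 := LinearMap.congr_fun (L6' b F bB hs hF) (comulB b bB hd a)
      simp only [LinearMap.comp_apply, LinearMap.coe_restrictScalars,
        AlgHom.toLinearMap_apply, Algebra.linearMap_apply] at h5 h6
      rw [h5, h6, hsq2 b F bB hd hF, HopfAlgebra.mul_antipode_lTensor_comul_apply,
        hsq3 b F bB hc hF, F.commutes, IsScalarTower.algebraMap_apply R₀ R A] }

end Descent

section Main

variable {R : Type u_r} [CommRing R] {A : Type u_a} [Ring A] [HopfAlgebra R A]
variable {ι : Type u_i} [Fintype ι] (b : Module.Basis ι R A)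

open Coalgebra HopfAlgebra

/-- the set of structure constants of the Hopf algebra `A` w.r.t. the basis `b` -/
def structConsts : Set R :=
  (Set.range fun p : ι × ι × ι => b.repr (b p.1 * b p.2.1) p.2.2) ∪
  (Set.range fun k : ι => b.repr 1 k) ∪
  (Set.range fun i : ι => counit (R := R) (b i)) ∪
  (Set.range fun p : ι × (ι × ι) => ((b.tensorProduct b).repr (comul (R := R) (b p.1))) p.2) ∪
  (Set.range fun p : ι × ι => b.repr (antipode (R := R) (b p.1)) p.2)

theorem structConsts_finite : (structConsts b).Finite :=
  ((((Set.finite_range _).union (Set.finite_range _)).union (Set.finite_range _)).union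
    (Set.finite_range _)).union (Set.finite_range _)

/-- the subring generated by the structure constants -/
def R0 : Subalgebra ℤ R := Algebra.adjoin ℤ (structConsts b)

theorem R0_fg : (R0 b).FG :=
  Subalgebra.fg_def.mpr ⟨structConsts b, structConsts_finite b, rfl⟩

theorem hm0 (i j k : ι) : b.repr (b i * b j) k ∈ R0 b :=
  Algebra.subset_adjoin (Or.inl (Or.inl (Or.inl (Or.inl ⟨(i, j, k), rfl⟩))))

theorem hu0 (k : ι) : b.repr 1 k ∈ R0 b :=
  Algebra.subset_adjoin (Or.inl (Or.inl (Or.inl (Or.inr ⟨k, rfl⟩))))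

theorem hc0 (i : ι) : counit (R := R) (b i) ∈ R0 b :=
  Algebra.subset_adjoin (Or.inl (Or.inl (Or.inr ⟨i, rfl⟩)))

theorem hd0 (i : ι) (jk : ι × ι) :
    ((b.tensorProduct b).repr (comul (R := R) (b i))) jk ∈ R0 b :=
  Algebra.subset_adjoin (Or.inl (Or.inr ⟨(i, jk), rfl⟩))

theorem hs0 (i k : ι) : (b.repr (antipode (R := R) (b i))) k ∈ R0 b :=
  Algebra.subset_adjoin (Or.inr ⟨(i, k), rfl⟩)

theorem R0_countable : Countable (R0 b) := by
  haveI := (structConsts_finite b).to_subtype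
  haveI : Countable (MvPolynomial (structConsts b) ℤ) :=
    Countable.of_equiv _ AddMonoidAlgebra.coeffEquiv.symm
  have hsurj : Function.Surjective (fun p : MvPolynomial (structConsts b) ℤ =>
      (⟨MvPolynomial.aeval Subtype.val p, by
        have : MvPolynomial.aeval (Subtype.val : structConsts b → R) p ∈
            (MvPolynomial.aeval (Subtype.val : structConsts b → R)).range :=
          ⟨p, rfl⟩
        rw [R0, Algebra.adjoin_eq_range]
        exact this⟩ : R0 b)) := by
    rintro ⟨x, hx⟩
    rw [R0, Algebra.adjoin_eq_range, AlgHom.mem_range] at hx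
    obtain ⟨p, hp⟩ := hx
    exact ⟨p, Subtype.ext hp⟩
  exact hsurj.countable

theorem one_mem_span : (1 : A) ∈ Submodule.span (R0 b) (Set.range ⇑b) := by
  rw [show (1 : A) = ∑ k : ι, b.repr 1 k • b k from (b.sum_repr 1).symm]
  refine Submodule.sum_mem _ fun k _ => ?_
  rw [show b.repr 1 k • b k = ((⟨b.repr 1 k, hu0 b k⟩ : R0 b)) • b k from
    (coeSmul (R₀ := R0 b) ⟨b.repr 1 k, hu0 b k⟩ (b k)).symm]
  exact Submodule.smul_mem _ _ (Submodule.subset_span ⟨k, rfl⟩)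

theorem mul_mem_span : ∀ x ∈ Submodule.span (R0 b) (Set.range ⇑b),
    ∀ y ∈ Submodule.span (R0 b) (Set.range ⇑b), x * y ∈ Submodule.span (R0 b) (Set.range ⇑b) := by
  have key : Submodule.span (R0 b) (Set.range ⇑b) * Submodule.span (R0 b) (Set.range ⇑b) ≤
      Submodule.span (R0 b) (Set.range ⇑b) := by
    rw [Submodule.span_mul_span]
    refine Submodule.span_le.mpr ?_
    rintro z hz
    rw [Set.mem_mul] at hz
    obtain ⟨x, ⟨i, rfl⟩, y, ⟨j, rfl⟩, rfl⟩ := hz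
    rw [show b i * b j = ∑ k : ι, b.repr (b i * b j) k • b k from (b.sum_repr _).symm]
    refine Submodule.sum_mem _ fun k _ => ?_
    rw [show b.repr (b i * b j) k • b k =
      ((⟨b.repr (b i * b j) k, hm0 b i j k⟩ : R0 b)) • b k from
      (coeSmul (R₀ := R0 b) ⟨b.repr (b i * b j) k, hm0 b i j k⟩ (b k)).symm]
    exact Submodule.smul_mem _ _ (Submodule.subset_span ⟨k, rfl⟩)
  exact fun x hx y hy => key (Submodule.mul_mem_mul hx hy)

/-- the integral form of `A`: the `R0`-span of the basis, as a subalgebra -/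
def A0 : Subalgebra (R0 b) A :=
  (Submodule.span (R0 b) (Set.range ⇑b)).toSubalgebra (one_mem_span b)
    (fun x y hx hy => mul_mem_span b x hx y hy)

theorem b_mem_A0 (i : ι) : b i ∈ A0 b := Submodule.subset_span ⟨i, rfl⟩

/-- the basis family inside `A0` -/
def bA0fam : ι → A0 b := fun i => ⟨b i, b_mem_A0 b i⟩

theorem li_restrict : LinearIndependent (R0 b) ⇑b :=
  b.linearIndependent.restrict_scalars
    (fun x y hxy => halg_inj (by simpa [Algebra.smul_def] using hxy))

theorem li_fam : LinearIndependent (R0 b) (bA0fam b) := by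
  apply LinearIndependent.of_comp ((A0 b).val.toLinearMap)
  have h : ⇑(A0 b).val.toLinearMap ∘ bA0fam b = ⇑b := funext fun i => rfl
  rw [h]
  exact li_restrict b

theorem span_fam : ⊤ ≤ Submodule.span (R0 b) (Set.range (bA0fam b)) := by
  intro x _
  have hx : (x : A) ∈ Submodule.span (R0 b) (Set.range ⇑b) := x.2
  have hle : Submodule.span (R0 b) (Set.range ⇑b) ≤
      Submodule.map (A0 b).val.toLinearMap (Submodule.span (R0 b) (Set.range (bA0fam b))) := by
    refine Submodule.span_le.mpr ?_
    rintro _ ⟨i, rfl⟩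
    exact ⟨bA0fam b i, Submodule.subset_span ⟨i, rfl⟩, rfl⟩
  obtain ⟨y, hy, hyx⟩ := hle hx
  have hxy : y = x := Subtype.ext hyx
  exact hxy ▸ hy

/-- basis of the integral form -/
def bA0 : Module.Basis ι (R0 b) (A0 b) := Module.Basis.mk (li_fam b) (span_fam b)

theorem A0_countable : Countable (A0 b) := by
  haveI := R0_countable b
  exact Countable.of_equiv _ (bA0 b).repr.toEquiv.symm

end Main


universe w

/-- A witness that the Hopf algebra `A` over `R` descends to a finitely
generated `ℤ`-subalgebra `R₀ ⊆ R`: a Hopf algebra `A₀` over `R₀`, free of finite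
rank, together with an isomorphism of Hopf algebras over `R` between
`R ⊗[R₀] A₀` (with its base-change Hopf structure) and `A`.  The latter is
encoded as an `R`-algebra isomorphism `e` which, on the canonical generators
`φ(a) = e(1 ⊗ a)`, is compatible with the counits and comultiplications (the
compatibility of comultiplications being expressed on an arbitrary
representation of `comul a` as a finite sum of pure tensors). -/
structure HopfDescentData (R : Type*) [CommRing R] (A : Type*) [Ring A]
    [HopfAlgebra R A] where
  R₀ : Subalgebra ℤ R
  fg : R₀.FG
  A₀ : Type w
  [ringA₀ : Ring A₀]
  [hopfA₀ : HopfAlgebra R₀ A₀]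
  free : Module.Free R₀ A₀
  finite : Module.Finite R₀ A₀
  e : (R ⊗[R₀] A₀) ≃ₐ[R] A
  φ' : A₀ → A
  hφ' : ∀ a : A₀, φ' a = e ((1 : R) ⊗ₜ[R₀] a)
  counit_compat : ∀ a : A₀,
    CoalgebraStruct.counit (R := R) (A := A) (φ' a)
      = algebraMap R₀ R (CoalgebraStruct.counit (R := R₀) (A := A₀) a)
  comul_compat : ∀ (a : A₀) (s : Finset ℕ) (y z : ℕ → A₀),
    CoalgebraStruct.comul (R := R₀) (A := A₀) a = ∑ i ∈ s, y i ⊗ₜ[R₀] z i →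
    CoalgebraStruct.comul (R := R) (A := A) (φ' a)
      = ∑ i ∈ s, φ' (y i) ⊗ₜ[R] φ' (z i)

/-- (Descent of a finite free Hopf algebra to a finitely generated
`ℤ`-subalgebra.)  If `A` is a Hopf algebra over a commutative ring `R`, free of
finite rank as an `R`-module, then there are a subring `R₀ ⊆ R` finitely
generated as a `ℤ`-algebra and a Hopf algebra `A₀` over `R₀`, free of finite
rank, with `R ⊗[R₀] A₀ ≅ A` as Hopf algebras over `R`. -/
theorem hopf_descends_to_fg_subring (R : Type*) [CommRing R] (A : Type*) [Ring A]
    [HopfAlgebra R A] [Module.Free R A] [Module.Finite R A] :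
    Nonempty (HopfDescentData.{w} R A) := by
  let b : Module.Basis (Module.Free.ChooseBasisIndex R A) R A := Module.Free.chooseBasis R A
  haveI := A0_countable b
  haveI : Small.{w} (A0 b) := inferInstance
  let B : Type w := Shrink.{w} (A0 b)
  let ψ : B ≃ₐ[R0 b] A0 b := Shrink.algEquiv (R0 b) (A0 b)
  let F : B →ₐ[R0 b] A := ((A0 b).val).comp ψ.toAlgHom
  let bB : Module.Basis (Module.Free.ChooseBasisIndex R A) (R0 b) B :=
    (bA0 b).map ψ.toLinearEquiv.symm
  have hF : ∀ i, F (bB i) = b i := by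
    intro i
    show (A0 b).val (ψ (ψ.toLinearEquiv.symm ((bA0 b) i))) = b i
    have h1 : ψ (ψ.toLinearEquiv.symm ((bA0 b) i)) = (bA0 b) i := ψ.apply_symm_apply _
    rw [h1]
    show (((bA0 b) i : A0 b) : A) = b i
    rw [bA0, Module.Basis.mk_apply]
    rfl
  letI hopfB : HopfAlgebra (R0 b) B :=
    hopfAlgebraB b F bB (hd0 b) (hc0 b) (hs0 b) hF
  -- the base change isomorphism
  let f : (R ⊗[R0 b] B) →ₐ[R] A :=
    Algebra.TensorProduct.lift (Algebra.ofId R A) F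
      (fun x y => show Commute (Algebra.ofId R A x) (F y) from Algebra.commutes x (F y))
  let bR : Module.Basis (Module.Free.ChooseBasisIndex R A) R (R ⊗[R0 b] B) :=
    Algebra.TensorProduct.basis R bB
  have hfb : ∀ i, f (bR i) = b i := by
    intro i
    rw [show bR i = (1 : R) ⊗ₜ[R0 b] bB i from Algebra.TensorProduct.basis_apply bB i]
    simp only [f]
    rw [Algebra.TensorProduct.lift_tmul, map_one, one_mul, hF]
  have hlin : f.toLinearMap =
      ((bR.equiv b (Equiv.refl _)) : R ⊗[R0 b] B →ₗ[R] A) := by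
    refine Module.Basis.ext bR fun i => ?_
    rw [AlgHom.toLinearMap_apply, hfb, LinearEquiv.coe_coe, Module.Basis.equiv_apply, Equiv.refl_apply]
  have hbij : Function.Bijective f := by
    have hfun : ⇑f = ⇑(bR.equiv b (Equiv.refl _)) := by
      funext x
      exact LinearMap.congr_fun hlin x
    rw [hfun]
    exact (bR.equiv b (Equiv.refl _)).bijective
  let e : (R ⊗[R0 b] B) ≃ₐ[R] A := AlgEquiv.ofBijective f hbij
  have he1 : ∀ a : B, e ((1 : R) ⊗ₜ[R0 b] a) = F a := by
    intro a
    show f ((1 : R) ⊗ₜ[R0 b] a) = F a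
    simp only [f]
    rw [Algebra.TensorProduct.lift_tmul, map_one, one_mul]
  refine ⟨{ R₀ := R0 b, fg := R0_fg b, A₀ := B,
            free := Module.Free.of_basis bB, finite := Module.Finite.of_basis bB,
            e := e, φ' := fun a => e ((1 : R) ⊗ₜ[R0 b] a), hφ' := fun a => rfl,
            counit_compat := ?_, comul_compat := ?_ }⟩
  · intro a
    show Coalgebra.counit (e ((1 : R) ⊗ₜ[R0 b] a)) = algebraMap (R0 b) R _
    rw [he1 a]
    exact hsq3 b F bB (hc0 b) hF a
  · intro a s y z hrep
    have hrep' : comulB b bB (hd0 b) a = ∑ i ∈ s, y i ⊗ₜ[R0 b] z i := hrep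
    have h2 := hsq2 b F bB (hd0 b) hF a
    show Coalgebra.comul (e ((1 : R) ⊗ₜ[R0 b] a)) = _
    rw [he1 a, ← h2, hrep', map_sum]
    refine Finset.sum_congr rfl fun i _ => ?_
    rw [j2_tmul]
    show F (y i) ⊗ₜ[R] F (z i) = e ((1 : R) ⊗ₜ[R0 b] y i) ⊗ₜ[R] e ((1 : R) ⊗ₜ[R0 b] z i)
    rw [he1, he1]
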